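/- arXiv:0707.4633 — 3 statements merged into one kernel-verified Lean document; each statement's English description precedes it below -/
import Mathlib

section
/- The number of permutations in S_n avoiding 1-2-34 and 2-1-3 equals the Fibonacci number F_{2n-1}, where F_1 = F_2 = 1. -/
/-!
In a permutation avoiding 2-1-3, the entries before the maximum increase; if moreover it avoids
1-2-34, the maximum cannot stand at a position `q ≥ 3`, since `π 0 < π 1 < π (q-1) < π q` would be
an occurrence of 1-2-34. So the maximum of an avoider of length `n + 1` is at position 0, 1 or 2,
and deleting it leaves an avoider of length `n`. Conversely, inserting the maximum at position 0
or 1 always produces an avoider, and at position 2 it does so exactly when the first two entries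
increase; among avoiders of length `n ≥ 2` this fails exactly when the maximum comes first. Hence
the number `a n` of avoiders of length `n` satisfies `a (n + 1) = 3 a n - a (n - 1)`, which is also
the recurrence of `F (2n - 1)`.
-/

def Contains213 {n : ℕ} (π : Equiv.Perm (Fin n)) : Prop :=
  ∃ i j k : Fin n, i < j ∧ j < k ∧ π j < π i ∧ π i < π k

def Contains1'2'34 {n : ℕ} (π : Equiv.Perm (Fin n)) : Prop :=
  ∃ i j k k' : Fin n, i < j ∧ j < k ∧ (k' : ℕ) = (k : ℕ) + 1 ∧
    π i < π j ∧ π j < π k ∧ π k < π k'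

open Equiv Fin Finset

namespace PatternAvoidance

variable {n : ℕ}

def Avoids (π : Perm (Fin n)) : Prop := ¬ Contains1'2'34 π ∧ ¬ Contains213 π

lemma val_succAbove (p : Fin (n + 1)) (i : Fin n) :
    (p.succAbove i : ℕ) = if (i : ℕ) < p then (i : ℕ) else (i : ℕ) + 1 := by
  unfold succAbove
  split_ifs <;> simp_all [Fin.lt_def]

/-- In one-line notation, `insertMax p σ` is `σ` with the new largest value `n` inserted at
position `p`. -/
def insertMax (p : Fin (n + 1)) (σ : Perm (Fin n)) : Perm (Fin (n + 1)) :=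
  (finSuccEquiv' p).trans (σ.optionCongr.trans (finSuccEquiv' (last n)).symm)

@[simp]
lemma insertMax_apply_self (p : Fin (n + 1)) (σ : Perm (Fin n)) : insertMax p σ p = last n := by
  simp [insertMax]

@[simp]
lemma insertMax_apply_succAbove (p : Fin (n + 1)) (σ : Perm (Fin n)) (i : Fin n) :
    insertMax p σ (p.succAbove i) = (σ i).castSucc := by
  simp [insertMax]

lemma insertMax_injective (p : Fin (n + 1)) : Function.Injective (insertMax (n := n) p) := by
  intro σ τ h
  refine optionCongr_injective (Equiv.ext fun x => ?_)
  simpa [insertMax] using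
    congrArg (fun π => finSuccEquiv' (last n) (π ((finSuccEquiv' p).symm x))) h

lemma exists_insertMax_eq {p : Fin (n + 1)} {π : Perm (Fin (n + 1))} (hp : π p = last n) :
    ∃ σ, insertMax p σ = π := by
  set e : Perm (Option (Fin n)) := (finSuccEquiv' p).symm.trans (π.trans (finSuccEquiv' (last n)))
  have he : e none = none := by simp [e, hp]
  refine ⟨removeNone e, ?_⟩
  have : (removeNone e).optionCongr = e := by simp [map_equiv_removeNone, he, Perm.one_def]
  ext x
  simp [insertMax, this, e]

def HasInversionBefore (σ : Perm (Fin n)) (p : ℕ) : Prop :=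
  ∃ i j : Fin n, i < j ∧ (j : ℕ) < p ∧ σ j < σ i

lemma contains213_insertMax_iff (p : Fin (n + 1)) (σ : Perm (Fin n)) :
    Contains213 (insertMax p σ) ↔ Contains213 σ ∨ HasInversionBefore σ p := by
  constructor
  · rintro ⟨a, b, c, hab, hbc, hba, hac⟩
    rcases eq_self_or_eq_succAbove p a with rfl | ⟨i, rfl⟩
    · exact absurd hac (by simpa using le_last _)
    rcases eq_self_or_eq_succAbove p b with rfl | ⟨j, rfl⟩
    · exact absurd hba (by simpa using le_last _)
    rw [succAbove_lt_succAbove_iff] at hab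
    rcases eq_self_or_eq_succAbove p c with rfl | ⟨k, rfl⟩
    · refine Or.inr ⟨i, j, hab, ?_, by simpa using hba⟩
      rw [Fin.lt_def, val_succAbove] at hbc
      split_ifs at hbc <;> omega
    · rw [succAbove_lt_succAbove_iff] at hbc
      exact Or.inl ⟨i, j, k, hab, hbc, by simpa using hba, by simpa using hac⟩
  · rintro (⟨i, j, k, hij, hjk, hji, hik⟩ | ⟨i, j, hij, hjp, hji⟩)
    · exact ⟨p.succAbove i, p.succAbove j, p.succAbove k, by simpa, by simpa, by simpa,
        by simpa⟩
    · refine ⟨p.succAbove i, p.succAbove j, p, by simpa, ?_, by simpa, by simp⟩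
      rw [Fin.lt_def, val_succAbove, if_pos hjp]
      exact hjp

lemma contains1'2'34_insertMax_iff {p : Fin (n + 1)} (hp : (p : ℕ) ≤ 2) (σ : Perm (Fin n)) :
    Contains1'2'34 (insertMax p σ) ↔ Contains1'2'34 σ := by
  constructor
  · rintro ⟨a, b, c, d, hab, hbc, hcd, h₁, h₂, h₃⟩
    rcases eq_self_or_eq_succAbove p a with rfl | ⟨i, rfl⟩
    · exact absurd h₁ (by simpa using le_last _)
    rcases eq_self_or_eq_succAbove p b with rfl | ⟨j, rfl⟩
    · exact absurd h₂ (by simpa using le_last _)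
    rcases eq_self_or_eq_succAbove p c with rfl | ⟨k, rfl⟩
    · exact absurd h₃ (by simpa using le_last _)
    rcases eq_self_or_eq_succAbove p d with rfl | ⟨l, rfl⟩
    · rw [Fin.lt_def] at hab hbc
      omega
    refine ⟨i, j, k, l, by simpa using hab, by simpa using hbc, ?_, by simpa using h₁,
      by simpa using h₂, by simpa using h₃⟩
    rw [Fin.lt_def] at hab hbc
    rw [val_succAbove, val_succAbove] at hcd hbc
    split_ifs at hcd hbc <;> omega
  · rintro ⟨i, j, k, l, hij, hjk, hkl, h₁, h₂, h₃⟩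
    refine ⟨p.succAbove i, p.succAbove j, p.succAbove k, p.succAbove l, by simpa, by simpa, ?_,
      by simpa, by simpa, by simpa⟩
    rw [Fin.lt_def] at hij hjk
    rw [val_succAbove, val_succAbove]
    split_ifs <;> omega

lemma avoids_insertMax_iff {p : Fin (n + 1)} (hp : (p : ℕ) ≤ 2) (σ : Perm (Fin n)) :
    Avoids (insertMax p σ) ↔ Avoids σ ∧ ¬ HasInversionBefore σ p := by
  simp only [Avoids, contains1'2'34_insertMax_iff hp, contains213_insertMax_iff, not_or, and_assoc]

lemma not_hasInversionBefore_of_le_one (σ : Perm (Fin n)) {p : ℕ} (hp : p ≤ 1) :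
    ¬ HasInversionBefore σ p := by
  rintro ⟨i, j, hij, hjp, -⟩
  rw [Fin.lt_def] at hij
  omega

lemma hasInversionBefore_two_iff (σ : Perm (Fin (n + 2))) :
    HasInversionBefore σ 2 ↔ σ 1 < σ 0 := by
  constructor
  · rintro ⟨i, j, hij, hj, hji⟩
    rw [Fin.lt_def] at hij
    obtain rfl : i = 0 := Fin.ext (by rw [Fin.val_zero]; omega)
    obtain rfl : j = 1 := Fin.ext (by rw [Fin.val_one]; omega)
    exact hji
  · exact fun h => ⟨0, 1, by simp, by simp, h⟩

lemma apply_lt_last_of_ne_symm_last {π : Perm (Fin (n + 1))} {i : Fin (n + 1)}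
    (hi : i ≠ π.symm (last n)) : π i < last n :=
  (le_last _).lt_of_ne fun e => hi ((eq_symm_apply π).2 e)

lemma apply_lt_apply_of_lt_of_lt_symm_last {π : Perm (Fin (n + 1))} (h : ¬ Contains213 π)
    {i j : Fin (n + 1)} (hij : i < j) (hj : j < π.symm (last n)) : π i < π j := by
  by_contra! hji
  have hq : π (π.symm (last n)) = last n := π.apply_symm_apply _
  refine h ⟨i, j, _, hij, hj, lt_of_le_of_ne hji (π.injective.ne hij.ne'), ?_⟩
  rw [hq]
  exact apply_lt_last_of_ne_symm_last (hij.trans hj).ne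

lemma symm_last_le_two_of_avoids {π : Perm (Fin (n + 1))} (h : Avoids π) :
    (π.symm (last n) : ℕ) ≤ 2 := by
  set q := π.symm (last n)
  have hq : π q = last n := π.apply_symm_apply _
  by_contra! hq3
  let a : Fin (n + 1) := ⟨0, by omega⟩
  let b : Fin (n + 1) := ⟨1, by omega⟩
  let c : Fin (n + 1) := ⟨q - 1, by omega⟩
  have hab : a < b := Fin.lt_def.2 Nat.zero_lt_one
  have hbc : b < c := Fin.lt_def.2 (show 1 < (q : ℕ) - 1 by omega)
  have hcq : c < q := Fin.lt_def.2 (show (q : ℕ) - 1 < q by omega)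
  refine h.1 ⟨a, b, c, q, hab, hbc, show (q : ℕ) = q - 1 + 1 by omega,
    apply_lt_apply_of_lt_of_lt_symm_last h.2 hab (hbc.trans hcq),
    apply_lt_apply_of_lt_of_lt_symm_last h.2 hbc hcq, ?_⟩
  rw [hq]
  exact apply_lt_last_of_ne_symm_last hcq.ne

lemma hasInversionBefore_two_iff_of_not_contains213 {σ : Perm (Fin (n + 2))}
    (h : ¬ Contains213 σ) : HasInversionBefore σ 2 ↔ σ 0 = last (n + 1) := by
  rw [hasInversionBefore_two_iff]
  constructor
  · intro h10
    by_contra h0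
    have hq0 : 0 ≠ σ.symm (last (n + 1)) := fun e => h0 (by rw [e, apply_symm_apply])
    have hq1 : 1 ≠ σ.symm (last (n + 1)) := fun e =>
      (h10.trans_le (le_last _)).ne (by rw [e, apply_symm_apply])
    have h1q : 1 < σ.symm (last (n + 1)) := by
      have h0' := Fin.val_ne_of_ne hq0
      have h1' := Fin.val_ne_of_ne hq1
      rw [Fin.val_zero] at h0'
      rw [Fin.val_one] at h1'
      rw [Fin.lt_def, Fin.val_one]
      omega
    exact (apply_lt_apply_of_lt_of_lt_symm_last h (by simp) h1q).not_gt h10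
  · intro h0
    rw [h0]
    exact (le_last _).lt_of_ne fun e => one_ne_zero (σ.injective (e.trans h0.symm))

section Counting

open scoped Classical

noncomputable def avoiders (n : ℕ) : Finset (Perm (Fin n)) := {π | Avoids π}

lemma mem_avoiders {π : Perm (Fin n)} : π ∈ avoiders n ↔ Avoids π := by
  simp [avoiders]

lemma card_avoiders_filter_symm_last_eq {q : ℕ} (hq : q ≤ 2) (hqn : q < n + 1) :
    #{π ∈ avoiders (n + 1) | (π.symm (last n) : ℕ) = q} =
      #{σ ∈ avoiders n | ¬ HasInversionBefore σ q} := by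
  set p : Fin (n + 1) := ⟨q, hqn⟩
  have hpos (π : Perm (Fin (n + 1))) : (π.symm (last n) : ℕ) = q ↔ π p = last n := by
    rw [← eq_symm_apply, eq_comm, Fin.ext_iff]
  symm
  refine card_nbij (insertMax p) (fun σ hσ => ?_) (insertMax_injective p).injOn fun π hπ => ?_
  · simp only [coe_filter, Set.mem_ofPred_eq, mem_avoiders, hpos, insertMax_apply_self,
      and_true] at hσ ⊢
    exact (avoids_insertMax_iff hq σ).2 hσ
  · simp only [coe_filter, Set.mem_ofPred_eq, mem_avoiders, hpos] at hπ
    obtain ⟨σ, rfl⟩ := exists_insertMax_eq hπ.2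
    exact ⟨σ, by simpa [mem_avoiders] using (avoids_insertMax_iff hq σ).1 hπ.1, rfl⟩

lemma card_avoiders_filter_symm_last_eq_zero (n : ℕ) :
    #{π ∈ avoiders (n + 1) | (π.symm (last n) : ℕ) = 0} = #(avoiders n) := by
  rw [card_avoiders_filter_symm_last_eq (by norm_num) (by omega),
    filter_true_of_mem fun σ _ => not_hasInversionBefore_of_le_one σ zero_le_one]

lemma card_avoiders_add_three (n : ℕ) :
    #(avoiders (n + 3)) + #(avoiders (n + 1)) = 3 * #(avoiders (n + 2)) := by
  have hsplit := card_eq_sum_card_fiberwise (s := avoiders (n + 3)) (t := range 3)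
    (f := fun π => (π.symm (last (n + 2)) : ℕ)) fun π hπ =>
      mem_range.2 (Nat.lt_succ_of_le (symm_last_le_two_of_avoids (mem_avoiders.1 hπ)))
  simp only [sum_range_succ, sum_range_zero, zero_add] at hsplit
  have h₀ : #{π ∈ avoiders (n + 3) | (π.symm (last (n + 2)) : ℕ) = 0} = #(avoiders (n + 2)) :=
    card_avoiders_filter_symm_last_eq_zero (n + 2)
  have h₁ : #{π ∈ avoiders (n + 3) | (π.symm (last (n + 2)) : ℕ) = 1} = #(avoiders (n + 2)) := by
    rw [card_avoiders_filter_symm_last_eq one_le_two (by omega),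
      filter_true_of_mem fun σ _ => not_hasInversionBefore_of_le_one σ le_rfl]
  have h₂ : #{π ∈ avoiders (n + 3) | (π.symm (last (n + 2)) : ℕ) = 2} + #(avoiders (n + 1)) =
      #(avoiders (n + 2)) := by
    rw [card_avoiders_filter_symm_last_eq le_rfl (by omega),
      ← card_avoiders_filter_symm_last_eq_zero (n + 1), add_comm]
    convert card_filter_add_card_filter_not (s := avoiders (n + 2))
      (p := fun σ => (σ.symm (last (n + 1)) : ℕ) = 0) using 3
    refine filter_congr fun σ hσ => ?_
    rw [hasInversionBefore_two_iff_of_not_contains213 (mem_avoiders.1 hσ).2, ← eq_symm_apply,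
      eq_comm, Fin.ext_iff, Fin.val_zero]
  omega

lemma card_avoiders_of_le_two (hn : n ≤ 2) : #(avoiders n) = n.factorial := by
  have hno (i j k : Fin n) (hij : i < j) (hjk : j < k) : False := by
    rw [Fin.lt_def] at hij hjk
    omega
  rw [avoiders, filter_true_of_mem, card_univ, Fintype.card_perm, Fintype.card_fin]
  rintro π -
  exact ⟨fun ⟨i, j, k, _, hij, hjk, _⟩ => hno i j k hij hjk,
    fun ⟨i, j, k, hij, hjk, _⟩ => hno i j k hij hjk⟩

lemma fib_add_five_add_fib (n : ℕ) :
    Nat.fib (2 * n + 5) + Nat.fib (2 * n + 1) = 3 * Nat.fib (2 * n + 3) := by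
  have h₅ : Nat.fib (2 * n + 5) = Nat.fib (2 * n + 3) + Nat.fib (2 * n + 4) := Nat.fib_add_two
  have h₄ : Nat.fib (2 * n + 4) = Nat.fib (2 * n + 2) + Nat.fib (2 * n + 3) := Nat.fib_add_two
  have h₃ : Nat.fib (2 * n + 3) = Nat.fib (2 * n + 1) + Nat.fib (2 * n + 2) := Nat.fib_add_two
  omega

theorem card_avoiders_succ : ∀ n : ℕ, #(avoiders (n + 1)) = Nat.fib (2 * n + 1)
  | 0 => by rw [card_avoiders_of_le_two (by norm_num)]; rfl
  | 1 => by rw [card_avoiders_of_le_two le_rfl]; rfl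
  | n + 2 => by
    have h := card_avoiders_add_three n
    rw [card_avoiders_succ n, card_avoiders_succ (n + 1)] at h
    have := fib_add_five_add_fib n
    show #(avoiders (n + 3)) = Nat.fib (2 * n + 5)
    rw [show 2 * (n + 1) + 1 = 2 * n + 3 by ring] at h
    omega

end Counting

end PatternAvoidance

open PatternAvoidance in
theorem stmt16 (n : ℕ) (hn : 1 ≤ n) :
    Nat.card {π : Equiv.Perm (Fin n) // ¬ Contains1'2'34 π ∧ ¬ Contains213 π}
      = Nat.fib (2 * n - 1) := by
  classical
  obtain ⟨m, rfl⟩ := Nat.exists_eq_add_of_le' hn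
  rw [Nat.card_eq_fintype_card, Fintype.card_subtype, show 2 * (m + 1) - 1 = 2 * m + 1 by omega,
    ← card_avoiders_succ]
  congr 1
  ext π
  simp [mem_avoiders, Avoids]
end

section
/- For all n, π ∈ S_n avoids {1-2-34, 2-1-3} if and only if π avoids {1-2-3-4, 2-1-3}. -/
/-- `π` contains the classical pattern 1-2-3-4. -/
def Contains1234 {n : ℕ} (π : Equiv.Perm (Fin n)) : Prop :=
  ∃ i j k l : Fin n, i < j ∧ j < k ∧ k < l ∧ π i < π j ∧ π j < π k ∧ π k < π l

theorem stmt17 (n : ℕ) (π : Equiv.Perm (Fin n)) :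
    (¬ Contains1'2'34 π ∧ ¬ Contains213 π) ↔ (¬ Contains1234 π ∧ ¬ Contains213 π) := by
  constructor
  · rintro ⟨h34, h213⟩
    refine ⟨?_, h213⟩
    rintro ⟨i, j, k, l, hij, hjk, hkl, h1, h2, h3⟩
    have key : ∀ d : ℕ, ∀ j k l : Fin n, (l : ℕ) - (k : ℕ) ≤ d → i < j → j < k → k < l →
        π i < π j → π j < π k → π k < π l → False := by
      intro d
      induction d with
      | zero =>
        intro j k l hd hij hjk hkl h1 h2 h3
        have h := Fin.lt_def.mp hkl
        omega
      | succ d ih =>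
        intro j k l hd hij hjk hkl h1 h2 h3
        have hkl' : (k : ℕ) < (l : ℕ) := hkl
        have hk1 : (k : ℕ) + 1 < n := lt_of_le_of_lt hkl' l.isLt
        let m : Fin n := ⟨(k : ℕ) + 1, hk1⟩
        have hkm : k < m := by simp [Fin.lt_def, m]
        have hne : π k ≠ π m := fun h => (Fin.lt_irrefl k (by simpa [π.injective h] using hkm))
        rcases hne.lt_or_gt with hlt | hgt
        · exact h34 ⟨i, j, k, m, hij, hjk, rfl, h1, h2, hlt⟩
        · have hml : m < l := by
            have hne2 : m ≠ l := fun h => absurd (h ▸ hgt) (not_lt.mpr h3.le)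
            have : (m : ℕ) ≤ (l : ℕ) := by simp [m]; omega
            exact lt_of_le_of_ne (Fin.le_def.mpr this) hne2
          have hjm : j < m := hjk.trans hkm
          have hne3 : π j ≠ π m := fun h => (Fin.lt_irrefl j (by simpa [π.injective h] using hjm))
          rcases hne3.lt_or_gt with hlt2 | hgt2
          · exact ih j m l (by simp [m]; omega) hij hjm hml h1 hlt2 (hgt.trans h3)
          · exact h213 ⟨j, m, l, hjm, hml, hgt2, h2.trans h3⟩
    exact key ((l : ℕ) - (k : ℕ)) j k l le_rfl hij hjk hkl h1 h2 h3
  · rintro ⟨h1234, h213⟩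
    refine ⟨?_, h213⟩
    rintro ⟨i, j, k, k', hij, hjk, hkk', h1, h2, h3⟩
    exact h1234 ⟨i, j, k, k', hij, hjk, by rw [Fin.lt_def]; omega, h1, h2, h3⟩
end

section
/- Let b_n be the number of permutations in S_n avoiding the generalized patterns 1-23 and 3-12. Then b_1 = 1, b_2 = 2, and for n ≥ 0, b_{n+2} = b_{n+1} + Σ_{k=0}^{n} binomial(n,k)·b_k, where b_0 = 1. -/
/-!
Read a permutation as a word and split it at its smallest letter `a`: `w = u a v`. Every ascent
after `a` would form a 1-23 with `a`, so `v` is decreasing; if `v` is nonempty, the ascent from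
`a` to the first letter of `v` forces every letter of `u` below that letter, which is therefore
the maximum `M`. Conversely `u a v` avoids both patterns as soon as `u` does and `v` is the
decreasing word on the remaining letters, subject to this constraint on `M`. Hence the avoiders
are counted by the admissible letter sets of `u`: all letters but `a` (then `v` is empty), or any
of the `2^n` subsets of the letters other than `a` and `M`, and the number of avoiders on a set
of letters depends only on its size.
-/

/-- `π` contains the generalized pattern 1-23 (last two positions adjacent). -/
def Contains1'23 {n : ℕ} (π : Equiv.Perm (Fin n)) : Prop :=
  ∃ i j j' : Fin n, i < j ∧ (j' : ℕ) = (j : ℕ) + 1 ∧ π i < π j ∧ π j < π j'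

/-- `π` contains the generalized pattern 3-12 (last two positions adjacent). -/
def Contains3'12 {n : ℕ} (π : Equiv.Perm (Fin n)) : Prop :=
  ∃ i j j' : Fin n, i < j ∧ (j' : ℕ) = (j : ℕ) + 1 ∧ π j < π j' ∧ π j' < π i

/-- `b n` = number of permutations of length `n` avoiding 1-23 and 3-12. -/
noncomputable def b (n : ℕ) : ℕ :=
  Nat.card {π : Equiv.Perm (Fin n) // ¬ Contains1'23 π ∧ ¬ Contains3'12 π}

variable {α : Type*} [LinearOrder α]

/-- An occurrence of 1-23 is `z < x < y` and one of 3-12 is `x < y < z`, for `z ∈ p`. -/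
def Avoids1'23And3'12 (l : List α) : Prop :=
  ∀ p x y s, l = p ++ x :: y :: s → x < y → ∀ z ∈ p, x ≤ z ∧ z ≤ y

theorem avoids1'23And3'12_iff_getElem {l : List α} :
    Avoids1'23And3'12 l ↔ ∀ i j (hij : i < j) (hj : j + 1 < l.length),
      l[j] < l[j + 1] → l[j] ≤ l[i] ∧ l[i] ≤ l[j + 1] := by
  constructor
  · intro h i j hij hj hlt
    refine h (l.take j) l[j] l[j + 1] (l.drop (j + 1 + 1)) ?_ hlt l[i]
      (List.mem_take_iff_getElem.2 ⟨i, by omega, rfl⟩)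
    rw [← List.drop_eq_getElem_cons, ← List.drop_eq_getElem_cons, List.take_append_drop]
  · rintro h p x y s rfl hxy z hz
    obtain ⟨i, hi, rfl⟩ := List.getElem_of_mem hz
    simpa [List.getElem_append_left hi] using h i p.length hi (by simp) (by simpa using hxy)

theorem avoids1'23And3'12_ofFn_iff {n : ℕ} (f : Fin n → α) :
    Avoids1'23And3'12 (List.ofFn f) ↔ ∀ i j j' : Fin n, i < j → (j' : ℕ) = j + 1 →
      f j < f j' → f j ≤ f i ∧ f i ≤ f j' := by
  rw [avoids1'23And3'12_iff_getElem]
  constructor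
  · rintro h i j ⟨j', hj'⟩ hij rfl
    have := h i j hij (by simpa using hj')
    simp only [List.getElem_ofFn] at this
    exact this
  · intro h i j hij hj
    simp only [List.length_ofFn] at hj
    simpa using h ⟨i, by omega⟩ ⟨j, by omega⟩ ⟨j + 1, hj⟩ hij rfl

theorem avoids1'23And3'12_ofFn_comp_iff {n : ℕ} (e : Fin n ↪o α) (π : Equiv.Perm (Fin n)) :
    Avoids1'23And3'12 (List.ofFn (e ∘ π)) ↔ ¬ Contains1'23 π ∧ ¬ Contains3'12 π := by
  simp only [avoids1'23And3'12_ofFn_iff, Function.comp_apply, e.lt_iff_lt, e.le_iff_le,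
    Contains1'23, Contains3'12, not_exists, not_and, not_lt]
  grind

theorem avoids1'23And3'12_append_cons_iff {u v : List α} {a : α} (hu : ∀ x ∈ u, a ≤ x)
    (hv : ∀ x ∈ v, a < x) :
    Avoids1'23And3'12 (u ++ a :: v) ↔
      Avoids1'23And3'12 u ∧ v.SortedGE ∧ ∀ x ∈ u, ∀ y ∈ v.head?, x ≤ y := by
  constructor
  · intro h
    refine ⟨fun p x y s hp => h p x y (s ++ a :: v) (by simp [hp]), ?_, fun x hx y hy => ?_⟩
    · rw [List.sortedGE_iff_isChain, List.isChain_iff_forall_rel_of_append_cons_cons]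
      rintro x y q s rfl
      by_contra hxy
      exact (hv x (by simp)).not_ge (h (u ++ a :: q) x y s (by simp) (not_le.1 hxy) a (by simp)).1
    · obtain ⟨s, rfl⟩ : ∃ s, v = y :: s := List.head?_eq_some_iff.1 hy
      exact (h u a y s rfl (hv y (by simp)) x hx).2
  · rintro ⟨hu', hv', hhead⟩ p x y s heq hxy z hz
    have hascent_at_a : ∀ s, v = y :: s → x = a → p = u → x ≤ z ∧ z ≤ y := by
      rintro s rfl rfl rfl
      exact ⟨hu z hz, hhead z hz y (by simp)⟩
    -- the ascent `x y` starts at `a`, lies in `v`, starts at `a`, ends at `a`, or lies in `u`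
    rcases List.append_eq_append_iff.1 heq with
      ⟨_ | ⟨c, q⟩, rfl, hq⟩ | ⟨_ | ⟨c, _ | ⟨d, q⟩⟩, rfl, hq⟩
    · simp only [List.nil_append, List.cons.injEq] at hq
      exact hascent_at_a s hq.2 hq.1.symm (by simp)
    · simp only [List.cons_append, List.cons.injEq] at hq
      obtain ⟨rfl, rfl⟩ := hq
      exact absurd hxy
        (not_lt.2 (List.isChain_iff_forall_rel_of_append_cons_cons.1 hv'.isChain rfl))
    · simp only [List.nil_append, List.cons.injEq] at hq
      exact hascent_at_a s hq.2.symm hq.1 (by simp)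
    · simp only [List.cons_append, List.nil_append, List.cons.injEq] at hq
      obtain ⟨rfl, rfl, rfl⟩ := hq
      exact absurd hxy (not_lt.2 (hu x (by simp)))
    · simp only [List.cons_append, List.cons.injEq] at hq
      obtain ⟨rfl, rfl, rfl⟩ := hq
      exact hu' p x y q rfl hxy z hz

theorem List.SortedGE.le_of_mem_head? {l : List α} (hl : l.SortedGE) {x y : α}
    (hy : y ∈ l.head?) (hx : x ∈ l) : x ≤ y := by
  obtain ⟨s, rfl⟩ := List.head?_eq_some_iff.1 hy
  rcases List.mem_cons.1 hx with rfl | hx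
  exacts [le_rfl, List.rel_of_pairwise_cons hl.pairwise hx]

def IsAvoidingArrangement (A : Finset α) (l : List α) : Prop :=
  l.Nodup ∧ l.toFinset = A ∧ Avoids1'23And3'12 l

def AvoidingArrangement (A : Finset α) : Type _ :=
  {l : List α // IsAvoidingArrangement A l}

def AvoidingArrangement.ofPerm (A : Finset α)
    (π : {π : Equiv.Perm (Fin A.card) // ¬ Contains1'23 π ∧ ¬ Contains3'12 π}) :
    AvoidingArrangement A :=
  ⟨List.ofFn (A.orderEmbOfFin rfl ∘ π.1),
    List.nodup_ofFn.2 ((A.orderEmbOfFin rfl).injective.comp π.1.injective),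
    by
      ext x
      rw [List.mem_toFinset, List.mem_ofFn, ← Set.mem_range, π.1.surjective.range_comp,
        A.range_orderEmbOfFin, Finset.mem_coe],
    (avoids1'23And3'12_ofFn_comp_iff _ _).2 π.2⟩

theorem AvoidingArrangement.ofPerm_bijective (A : Finset α) :
    Function.Bijective (AvoidingArrangement.ofPerm A) := by
  refine ⟨fun π σ h => ?_, fun ⟨l, hnd, hA, hl⟩ => ?_⟩
  · have := List.ofFn_injective (congrArg Subtype.val h)
    exact Subtype.ext (Equiv.ext fun i => (A.orderEmbOfFin rfl).injective (congrFun this i))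
  · have hlen : l.length = A.card := by rw [← hA, List.toFinset_card_of_nodup hnd]
    let g : Fin A.card → A := fun i =>
      ⟨l[i], hA ▸ List.mem_toFinset.2 (List.getElem_mem _)⟩
    have hg : Function.Bijective g := by
      refine (Fintype.bijective_iff_injective_and_card g).2 ⟨fun i j hij => ?_, by simp⟩
      exact Fin.ext ((hnd.getElem_inj_iff).1 (congrArg Subtype.val hij))
    let π := (Equiv.ofBijective g hg).trans (A.orderIsoOfFin rfl).symm.toEquiv
    have hπ : List.ofFn (A.orderEmbOfFin rfl ∘ π) = l := by
      refine List.ext_getElem (by simp [hlen]) fun i _ _ => ?_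
      simp [π, g, ← Finset.coe_orderIsoOfFin_apply]
    exact ⟨⟨π, (avoids1'23And3'12_ofFn_comp_iff _ _).1 (hπ ▸ hl)⟩, Subtype.ext hπ⟩

instance (A : Finset α) : Finite (AvoidingArrangement A) :=
  Finite.of_surjective _ (AvoidingArrangement.ofPerm_bijective A).2

theorem card_avoidingArrangement (A : Finset α) : Nat.card (AvoidingArrangement A) = b A.card :=
  (Nat.card_eq_of_bijective _ (AvoidingArrangement.ofPerm_bijective A)).symm

def prefixSets (A : Finset α) (a M : α) : Finset (Finset α) :=
  insert (A.erase a) ((A.erase a).erase M).powerset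

section Decomposition

variable {A : Finset α} {a M : α}

theorem subset_erase_of_mem_prefixSets {U : Finset α} (hU : U ∈ prefixSets A a M) :
    U ⊆ A.erase a := by
  rcases Finset.mem_insert.1 hU with rfl | h
  exacts [subset_rfl, (Finset.mem_powerset.1 h).trans (Finset.erase_subset _ _)]

theorem isAvoidingArrangement_append_cons_sort (ha : IsLeast (A : Set α) a)
    (hM : IsGreatest (A : Set α) M) (haM : a ≠ M) {U : Finset α} (hU : U ∈ prefixSets A a M)
    (u : AvoidingArrangement U) :
    IsAvoidingArrangement A (u.1 ++ a :: (A \ insert a U).sort (· ≥ ·)) := by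
  obtain ⟨u, hnd, rfl, hu⟩ := u
  have hUA := subset_erase_of_mem_prefixSets hU
  have hlt : ∀ x ∈ A, x ≠ a → a < x := fun x hx hxa => (ha.2 hx).lt_of_ne' hxa
  have hau : ∀ x ∈ u, a < x := fun x hx =>
    have h := hUA (List.mem_toFinset.2 hx)
    hlt x (Finset.mem_of_mem_erase h) (Finset.ne_of_mem_erase h)
  have hsort {x : α} : x ∈ (A \ insert a u.toFinset).sort (· ≥ ·) ↔ x ∈ A ∧ x ≠ a ∧ x ∉ u := by
    simp [Finset.mem_sort]
  refine ⟨?_, ?_, ?_⟩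
  · rw [List.nodup_middle, List.nodup_cons, List.nodup_append]
    refine ⟨?_, hnd, Finset.sort_nodup _ _, fun x hx y hy hxy => (hsort.1 (hxy ▸ hy)).2.2 hx⟩
    simp only [List.mem_append, hsort, not_or]
    exact ⟨fun h => (hau a h).false, by simp⟩
  · ext x
    simp only [List.toFinset_append, List.toFinset_cons, Finset.mem_union, Finset.mem_insert,
      List.mem_toFinset, hsort]
    have huA : ∀ x ∈ u, x ∈ A := fun x hx =>
      Finset.mem_of_mem_erase (hUA (List.mem_toFinset.2 hx))
    have haA : a ∈ A := ha.1
    grind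
  · refine (avoids1'23And3'12_append_cons_iff (fun x hx => (hau x hx).le)
      (fun x hx => hlt x (hsort.1 hx).1 (hsort.1 hx).2.1)).2
      ⟨hu, (Finset.sortedGT_sort _).sortedGE, fun x hx y hy => ?_⟩
    rcases Finset.mem_insert.1 hU with h | h
    · rw [h, Finset.insert_erase ha.1, Finset.sdiff_self, Finset.sort_empty] at hy
      simp at hy
    have hMu : M ∉ u := fun hMu =>
      Finset.notMem_erase M _ (Finset.mem_powerset.1 h (List.mem_toFinset.2 hMu))
    exact (hM.2 (Finset.mem_of_mem_erase (hUA (List.mem_toFinset.2 hx)))).trans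
      ((Finset.sortedGT_sort _).sortedGE.le_of_mem_head? hy (hsort.2 ⟨hM.1, haM.symm, hMu⟩))

theorem IsAvoidingArrangement.of_append_cons (ha : IsLeast (A : Set α) a)
    (hM : IsGreatest (A : Set α) M) {u v : List α} (h : IsAvoidingArrangement A (u ++ a :: v)) :
    u.toFinset ∈ prefixSets A a M ∧ IsAvoidingArrangement u.toFinset u ∧
      v = (A \ insert a u.toFinset).sort (· ≥ ·) := by
  obtain ⟨hnd, hA, hl⟩ := h
  rw [List.nodup_middle, List.nodup_cons, List.mem_append, not_or, List.nodup_append] at hnd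
  obtain ⟨⟨hau, hav⟩, hund, hvnd, hdisj⟩ := hnd
  have hmem : ∀ x, x ∈ A ↔ x = a ∨ x ∈ u ∨ x ∈ v := by
    simp [← hA]
  obtain ⟨hu, hv, hhead⟩ := (avoids1'23And3'12_append_cons_iff
    (fun x hx => ha.2 ((hmem x).2 (Or.inr (Or.inl hx))))
    (fun x hx => (ha.2 ((hmem x).2 (Or.inr (Or.inr hx)))).lt_of_ne' fun h => hav (h ▸ hx))).1 hl
  have hvsort : v = (A \ insert a u.toFinset).sort (· ≥ ·) := by
    have : A \ insert a u.toFinset = v.toFinset := by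
      ext x
      simp only [Finset.mem_sdiff, Finset.mem_insert, List.mem_toFinset, hmem]
      grind
    rw [this, eq_comm, List.toFinset_sort _ hvnd]
    exact hv.pairwise
  have hU : u.toFinset ∈ prefixSets A a M := by
    rw [prefixSets, Finset.mem_insert, Finset.mem_powerset]
    by_cases hMu : M ∈ u
    · left
      obtain rfl : v = [] := by
        cases v with
        | nil => rfl
        | cons y s =>
          have hyM := le_antisymm (hM.2 ((hmem y).2 (by simp))) (hhead M hMu y rfl)
          exact (hdisj M hMu M (hyM ▸ List.mem_cons_self) rfl).elim
      ext x
      simp only [List.mem_toFinset, Finset.mem_erase, hmem]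
      grind
    · right
      intro x hx
      simp only [List.mem_toFinset] at hx
      simp only [Finset.mem_erase, hmem]
      grind
  exact ⟨hU, ⟨hund, rfl, hu⟩, hvsort⟩

def AvoidingArrangement.glue (ha : IsLeast (A : Set α) a) (hM : IsGreatest (A : Set α) M)
    (haM : a ≠ M) (x : Σ U : prefixSets A a M, AvoidingArrangement U.1) :
    AvoidingArrangement A :=
  ⟨x.2.1 ++ a :: (A \ insert a x.1.1).sort (· ≥ ·),
    isAvoidingArrangement_append_cons_sort ha hM haM x.1.2 x.2⟩

theorem AvoidingArrangement.glue_bijective (ha : IsLeast (A : Set α) a)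
    (hM : IsGreatest (A : Set α) M) (haM : a ≠ M) :
    Function.Bijective (AvoidingArrangement.glue ha hM haM) := by
  refine ⟨?_, fun ⟨l, hl⟩ => ?_⟩
  · intro ⟨⟨U, hU⟩, u, _, hUu, _⟩ ⟨⟨U', _⟩, u', _, hUu', _⟩ h
    obtain rfl : u.toFinset = U := hUu
    obtain rfl : u'.toFinset = U' := hUu'
    have hau : a ∉ u := fun h =>
      Finset.notMem_erase a A (subset_erase_of_mem_prefixSets hU (List.mem_toFinset.2 h))
    have h := congrArg Subtype.val h
    simp only [AvoidingArrangement.glue] at h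
    rw [List.append_cons_inj_of_notMem hau (by simp [Finset.mem_sort])] at h
    exact Sigma.subtype_ext (Subtype.ext (congrArg List.toFinset h.1)) h.1
  · obtain ⟨u, v, rfl⟩ := List.append_of_mem (List.mem_toFinset.1 (hl.2.1 ▸ ha.1 : a ∈ l.toFinset))
    obtain ⟨hU, hu, rfl⟩ := IsAvoidingArrangement.of_append_cons ha hM hl
    exact ⟨⟨⟨u.toFinset, hU⟩, ⟨u, hu⟩⟩, rfl⟩

theorem b_card_eq_add_sum (ha : IsLeast (A : Set α) a) (hM : IsGreatest (A : Set α) M)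
    (haM : a ≠ M) :
    b A.card = b (A.erase a).card + ∑ U ∈ ((A.erase a).erase M).powerset, b U.card := by
  have hM' : M ∈ A.erase a := Finset.mem_erase.2 ⟨haM.symm, hM.1⟩
  rw [← card_avoidingArrangement,
    ← Nat.card_eq_of_bijective _ (AvoidingArrangement.glue_bijective ha hM haM), Nat.card_sigma,
    Finset.sum_coe_sort (prefixSets A a M) (fun U => Nat.card (AvoidingArrangement U)),
    prefixSets, Finset.sum_insert (fun h => Finset.notMem_erase M _ (Finset.mem_powerset.1 h hM'))]
  simp only [card_avoidingArrangement]

end Decomposition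

theorem b_add_two (n : ℕ) :
    b (n + 2) = b (n + 1) + ∑ k ∈ Finset.range (n + 1), Nat.choose n k * b k := by
  have h := b_card_eq_add_sum (A := Finset.univ) (a := (0 : Fin (n + 2))) (M := Fin.last (n + 1))
    ⟨by simp, fun x _ => Fin.zero_le x⟩ ⟨by simp, fun x _ => Fin.le_last x⟩ Fin.last_pos.ne
  rw [Finset.sum_powerset_apply_card] at h
  simpa [Finset.card_erase_of_mem] using h

theorem b_eq_factorial {n : ℕ} (hn : n < 3) : b n = n.factorial := by
  have hshort {i j j' : Fin n} (hij : i < j) (hj' : (j' : ℕ) = j + 1) : False := by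
    have : (i : ℕ) < j := hij
    omega
  have havoid (π : Equiv.Perm (Fin n)) : ¬ Contains1'23 π ∧ ¬ Contains3'12 π :=
    ⟨fun ⟨_, _, _, hij, hj', _⟩ => hshort hij hj', fun ⟨_, _, _, hij, hj', _⟩ => hshort hij hj'⟩
  rw [b, Nat.card_congr (Equiv.subtypeUnivEquiv havoid), Nat.card_perm, Nat.card_eq_fintype_card,
    Fintype.card_fin]

theorem stmt18 :
    b 0 = 1 ∧ b 1 = 1 ∧ b 2 = 2 ∧
    ∀ n : ℕ, b (n + 2) = b (n + 1) + ∑ k ∈ Finset.range (n + 1), Nat.choose n k * b k :=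
  ⟨b_eq_factorial (by norm_num), b_eq_factorial (by norm_num), b_eq_factorial (by norm_num),
    b_add_two⟩
end
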